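/- Let f_δ be the Morse perturbations of f = (1/ε)E_ε and u_δ : ℝ → W^{1,2}(S³) the entire solutions of ∂_t u_δ = −Df_δ(u_δ) converging to ±a₀ as t → +∞, uniformly bounded in W^{2α,2}(S³), and let u be the entire solution of the unperturbed flow ∂_t u = −Df(u) obtained as the limit of u_δ on compact time intervals with u(t) → u^{+∞} ∈ A_ε in W^{1,2}(S³) as t → +∞. Then for any η > 0 there exist T̄ > 0 and δ̄ > 0 such that f_δ(u_δ(t)) − f_δ(±a₀) < η for all t ≥ T̄ and all δ ∈ (0,δ̄). -/

import Mathlib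

/-!
Monotonicity of `f_δ` along `u_δ` reduces everything to a single large time `T`. There
`f_δ(u_δ(T)) ≤ f(u_δ(T)) + Mδ`, and for small `δ` the point `u_δ(T)` is close to `u(T)`, which
in turn is close to `u^{+∞} ∈ A_ε`; by continuity of `f` this gives
`f(u_δ(T)) < f(u^{+∞}) + η/2 = f(a₀) + η/2 = f_δ(a₀) + η/2`.

`H` stands for `W^{1,2}(S³)`.
-/

open Filter Topology Set Metric

noncomputable section

namespace PaperFormalization

variable {H : Type*} [NormedAddCommGroup H] [InnerProductSpace ℝ H] [CompleteSpace H]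

lemma exists_pos_closedBall_lt_of_tendsto {X : Type*} [PseudoMetricSpace X] {f : X → ℝ}
    {x : X} (hf : ContinuousAt f x) {u : ℝ → X} (hu : Tendsto u atTop (𝓝 x)) {c : ℝ}
    (hc : f x < c) : ∃ T > 0, ∃ r > 0, ∀ v ∈ closedBall (u T) r, f v < c := by
  obtain ⟨ε, hε, hball⟩ := Metric.eventually_nhds_iff.1 (hf.eventually (eventually_lt_nhds hc))
  obtain ⟨T, hT, huT⟩ := ((eventually_gt_atTop 0).and
    (hu.eventually (ball_mem_nhds x (half_pos hε)))).exists
  refine ⟨T, hT, ε / 2, half_pos hε, fun v hv => hball ?_⟩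
  calc dist v x ≤ dist v (u T) + dist (u T) x := dist_triangle _ _ _
    _ < ε / 2 + ε / 2 := add_lt_add_of_le_of_lt (mem_closedBall.1 hv) (mem_ball.1 huT)
    _ = ε := add_halves ε

lemma exists_forall_Ioo_of_eventually_nhdsGT {P : ℝ → Prop} {a c : ℝ} (hac : a < c)
    (h : ∀ᶠ x in 𝓝[>] a, P x) : ∃ b, a < b ∧ b ≤ c ∧ ∀ x, a < x → x < b → P x := by
  obtain ⟨d, had, hP⟩ := (nhdsGT_basis a).eventually_iff.1 h
  exact ⟨min d c, lt_min had hac, min_le_right _ _,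
    fun x hax hxb => hP ⟨hax, hxb.trans_le (min_le_left _ _)⟩⟩

theorem energy_continuity_at_infinity_general
    (f : H → ℝ) (hfc : Continuous f)
    (fδ : ℝ → H → ℝ) (δ₁ : ℝ) (hδ₁ : 0 < δ₁)
    (Aε : Set H) (a₀ : H)
    -- f_δ(±a₀) = f(±a₀): the perturbation vanishes at a₀ (g₁(±a₀) = 0)
    (hfδa₀ : ∀ δ, 0 < δ → δ < δ₁ → fδ δ a₀ = f a₀)
    -- f is constant on the critical manifold A_ε
    (hfA : ∀ v ∈ Aε, f v = f a₀)
    -- uniform bound |f_δ − f| ≤ M δ  (f_δ = f + δχG with χG bounded)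
    (M : ℝ) (hM : ∀ δ, 0 < δ → δ < δ₁ → ∀ u, |fδ δ u - f u| ≤ M * δ)
    -- the perturbed flows u_δ and the limiting flow u
    (uδ : ℝ → ℝ → H) (u : ℝ → H)
    -- the energy f_δ is (weakly) decreasing along u_δ
    (hmono : ∀ δ, 0 < δ → δ < δ₁ → ∀ s t : ℝ, s ≤ t → fδ δ (uδ δ t) ≤ fδ δ (uδ δ s))
    -- u_δ → u uniformly on compact time intervals, as δ ↓ 0
    (hcompconv : ∀ T > (0:ℝ), ∀ η > (0:ℝ), ∃ δ' > (0:ℝ), ∀ δ, 0 < δ → δ < δ' →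
      ∀ t ∈ Set.Icc (-T) T, ‖uδ δ t - u t‖ ≤ η)
    -- u(t) → u^{+∞} ∈ A_ε in W^{1,2} as t → +∞
    (uInf : H) (huInf : uInf ∈ Aε)
    (hu : Tendsto (fun t => ‖u t - uInf‖) atTop (𝓝 0)) :
    ∀ η > (0:ℝ), ∃ (Tb : ℝ) (δb : ℝ), 0 < Tb ∧ 0 < δb ∧ δb ≤ δ₁ ∧
      ∀ t ≥ Tb, ∀ δ, 0 < δ → δ < δb → fδ δ (uδ δ t) - fδ δ a₀ < η := by
  intro η hη
  obtain ⟨T, hT, r, hr, hsublevel⟩ := exists_pos_closedBall_lt_of_tendsto hfc.continuousAt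
    (tendsto_iff_norm_sub_tendsto_zero.2 hu) (lt_add_of_pos_right (f uInf) (half_pos hη))
  have hsmall : ∀ᶠ δ in 𝓝[>] 0, δ < δ₁ ∧ ‖uδ δ T - u T‖ ≤ r ∧ M * δ < η / 2 := by
    obtain ⟨δ', hδ', hconv⟩ := hcompconv T hT r hr
    have hMδ : Tendsto (fun δ => M * δ) (𝓝 0) (𝓝 0) := by
      simpa using (tendsto_id (x := 𝓝 (0 : ℝ))).const_mul M
    refine ((eventually_lt_nhds hδ₁).filter_mono nhdsWithin_le_nhds).and
      (((nhdsGT_basis 0).eventually_iff.2 ⟨δ', hδ', fun δ hδ => ?_⟩).and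
        ((hMδ.eventually (eventually_lt_nhds (half_pos hη))).filter_mono nhdsWithin_le_nhds))
    exact hconv δ hδ.1 hδ.2 T ⟨by linarith, le_rfl⟩
  obtain ⟨δb, hδb, hδbδ₁, hδbsmall⟩ := exists_forall_Ioo_of_eventually_nhdsGT hδ₁ hsmall
  refine ⟨T, δb, hT, hδb, hδbδ₁, fun t ht δ hδ hδδb => ?_⟩
  obtain ⟨hδδ₁, hclose, hMδ⟩ := hδbsmall δ hδ hδδb
  have hfuδT := hsublevel _ (mem_closedBall_iff_norm.2 hclose)
  calc fδ δ (uδ δ t) - fδ δ a₀ ≤ fδ δ (uδ δ T) - f uInf := by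
        rw [hfδa₀ δ hδ hδδ₁, ← hfA uInf huInf]
        linarith [hmono δ hδ hδδ₁ T t ht]
    _ ≤ f (uδ δ T) + M * δ - f uInf := by linarith [(abs_le.1 (hM δ hδ hδδ₁ (uδ δ T))).2]
    _ < η := by linarith

/-- For any `η > 0` there exist `T̄ > 0` and `δ̄ ∈ (0, δ₁)` such that
`f_δ(u_δ(t)) − f_δ(a₀) < η` for all `t ≥ T̄` and all `δ ∈ (0, δ̄)`.  (By evenness,
`f_δ(a₀) = f_δ(−a₀)`, so `±a₀` are covered simultaneously.) -/
theorem energy_continuity_at_infinity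
    (f : H → ℝ) (hfc : Continuous f)
    (fδ : ℝ → H → ℝ) (δ₁ : ℝ) (hδ₁ : 0 < δ₁)
    (Aε : Set H) (a₀ : H) (ha₀ : a₀ ∈ Aε)
    -- f_δ(±a₀) = f(±a₀): the perturbation vanishes at a₀ (g₁(±a₀) = 0)
    (hfδa₀ : ∀ δ, 0 < δ → δ < δ₁ → fδ δ a₀ = f a₀)
    (hfδeven : ∀ δ, 0 < δ → δ < δ₁ → ∀ u, fδ δ (-u) = fδ δ u)
    -- f is constant on the critical manifold A_ε
    (hfA : ∀ v ∈ Aε, f v = f a₀)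
    -- uniform bound |f_δ − f| ≤ M δ  (f_δ = f + δχG with χG bounded)
    (M : ℝ) (hM : ∀ δ, 0 < δ → δ < δ₁ → ∀ u, |fδ δ u - f u| ≤ M * δ)
    -- the perturbed flows u_δ and the limiting flow u
    (uδ : ℝ → ℝ → H) (u : ℝ → H)
    -- the energy f_δ is (weakly) decreasing along u_δ
    (hmono : ∀ δ, 0 < δ → δ < δ₁ → ∀ s t : ℝ, s ≤ t → fδ δ (uδ δ t) ≤ fδ δ (uδ δ s))
    -- u_δ(t) → ±a₀ in W^{1,2} as t → +∞ (so f_δ(u_δ(t)) ≥ f_δ(a₀) for all t)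
    (hlim : ∀ δ, 0 < δ → δ < δ₁ →
      Tendsto (fun t => min ‖uδ δ t - a₀‖ ‖uδ δ t + a₀‖) atTop (𝓝 0))
    -- u_δ → u uniformly on compact time intervals, as δ ↓ 0
    (hcompconv : ∀ T > (0:ℝ), ∀ η > (0:ℝ), ∃ δ' > (0:ℝ), ∀ δ, 0 < δ → δ < δ' →
      ∀ t ∈ Set.Icc (-T) T, ‖uδ δ t - u t‖ ≤ η)
    -- u(t) → u^{+∞} ∈ A_ε in W^{1,2} as t → +∞
    (uInf : H) (huInf : uInf ∈ Aε)
    (hu : Tendsto (fun t => ‖u t - uInf‖) atTop (𝓝 0)) :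
    ∀ η > (0:ℝ), ∃ (Tb : ℝ) (δb : ℝ), 0 < Tb ∧ 0 < δb ∧ δb ≤ δ₁ ∧
      ∀ t ≥ Tb, ∀ δ, 0 < δ → δ < δb → fδ δ (uδ δ t) - fδ δ a₀ < η :=
  energy_continuity_at_infinity_general f hfc fδ δ₁ hδ₁ Aε a₀ hfδa₀ hfA M hM uδ u hmono hcompconv
    uInf huInf hu

end PaperFormalization
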